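/- Let N be prime and let α ∈ ℂ^{2N} be supported on a set Γ with |Γ| ≤ N/2, and set f = Φα where Φ = [I F*] is the concatenation of the identity and the inverse DFT (spikes and sinusoids dictionary). Then α is the unique minimizer of ‖·‖₀ among all β ∈ ℂ^{2N} with Φβ = f. -/
import Mathlib


open scoped Classical

/-- The adjoint (inverse) unitary discrete Fourier transform. -/
noncomputable def idft (N : ℕ) [NeZero N] (b : ZMod N → ℂ) : ZMod N → ℂ :=
  fun t => (1 / Real.sqrt N : ℂ) *
    ∑ ω : ZMod N, b ω *
      Complex.exp ((2 * Real.pi * Complex.I * (ω.val : ℂ) * (t.val : ℂ)) / N)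

/-- The spikes-and-sinusoids dictionary `Φ = [I  F*] : ℂ^{2N} → ℂ^N`. -/
noncomputable def spikeSin (N : ℕ) [NeZero N]
    (α : (ZMod N → ℂ) × (ZMod N → ℂ)) : ZMod N → ℂ :=
  fun t => α.1 t + idft N α.2 t

/-- The `ℓ₀` "norm" (support size) of a coefficient vector in `ℂ^{2N}`. -/
noncomputable def l0 (N : ℕ) [NeZero N] (α : (ZMod N → ℂ) × (ZMod N → ℂ)) : ℕ :=
  (Finset.univ.filter (fun t => α.1 t ≠ 0)).card +
    (Finset.univ.filter (fun ω => α.2 ω ≠ 0)).card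

open Finset Equiv Matrix Polynomial

lemma finset_sum_ge (S : Finset ℕ) : ∑ j ∈ range S.card, j ≤ ∑ x ∈ S, x := by
  induction S using Finset.strongInduction with
  | _ S ih =>
    rcases S.eq_empty_or_nonempty with rfl | hne
    · simp
    · have hmax := S.max'_mem hne
      have h1 : S.card ≤ S.max' hne + 1 := by
        have : S ⊆ range (S.max' hne + 1) := fun x hx => mem_range.2 (Nat.lt_succ_of_le (le_max' S x hx))
        simpa using card_le_card this
      have he := ih (S.erase (S.max' hne)) (erase_ssubset hmax)
      have hc : (S.erase (S.max' hne)).card = S.card - 1 := card_erase_of_mem hmax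
      rw [hc] at he
      have hs : ∑ x ∈ S, x = S.max' hne + ∑ x ∈ S.erase (S.max' hne), x :=
        (add_sum_erase _ _ hmax).symm
      have hcard1 : 1 ≤ S.card := card_pos.2 hne
      have hr : ∑ j ∈ range S.card, j = ∑ j ∈ range (S.card - 1), j + (S.card - 1) := by
        conv_lhs => rw [show S.card = (S.card - 1) + 1 by omega, Finset.sum_range_succ]
      omega

lemma finset_sum_eq (S : Finset ℕ) (h : ∑ x ∈ S, x = ∑ j ∈ range S.card, j) :
    S = range S.card := by
  induction S using Finset.strongInduction with
  | _ S ih =>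
    rcases S.eq_empty_or_nonempty with rfl | hne
    · simp
    · have hmax := S.max'_mem hne
      have h1 : S.card ≤ S.max' hne + 1 := by
        have : S ⊆ range (S.max' hne + 1) := fun x hx => mem_range.2 (Nat.lt_succ_of_le (le_max' S x hx))
        simpa using card_le_card this
      have he := finset_sum_ge (S.erase (S.max' hne))
      have hc : (S.erase (S.max' hne)).card = S.card - 1 := card_erase_of_mem hmax
      rw [hc] at he
      have hs : ∑ x ∈ S, x = S.max' hne + ∑ x ∈ S.erase (S.max' hne), x :=
        (add_sum_erase _ _ hmax).symm
      have hcard1 : 1 ≤ S.card := card_pos.2 hne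
      have hr : ∑ j ∈ range S.card, j = ∑ j ∈ range (S.card - 1), j + (S.card - 1) := by
        conv_lhs => rw [show S.card = (S.card - 1) + 1 by omega, Finset.sum_range_succ]
      -- equality forces:
      have hm : S.max' hne = S.card - 1 := by omega
      have he2 : ∑ x ∈ S.erase (S.max' hne), x = ∑ j ∈ range (S.card - 1), j := by omega
      have := ih (S.erase (S.max' hne)) (erase_ssubset hmax) (by rw [hc]; exact he2)
      rw [hc] at this
      have h4 : S = insert (S.max' hne) (S.erase (S.max' hne)) := (insert_erase hmax).symm
      have h5 : range S.card = insert (S.card - 1) (range (S.card - 1)) := by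
        conv_lhs => rw [show S.card = (S.card - 1) + 1 by omega, Finset.range_add_one]
      rw [h5]; conv_lhs => rw [h4, this, hm]

section Aux
variable {k : ℕ}

lemma inj_sum_ge (f : Fin k → ℕ) (hf : Function.Injective f) :
    ∑ j ∈ range k, j ≤ ∑ i, f i := by
  have h1 : (image f univ).card = k := by
    rw [card_image_of_injective _ hf, card_univ, Fintype.card_fin]
  have h2 := finset_sum_ge (image f univ)
  rwa [h1, sum_image (fun x _ y _ h => hf h)] at h2

lemma inj_sum_eq_perm (f : Fin k → ℕ) (hf : Function.Injective f)
    (h : ∑ i, f i = ∑ j ∈ range k, j) : ∃ τ : Perm (Fin k), ∀ i, f i = (τ i : ℕ) := by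
  have h1 : (image f univ).card = k := by
    rw [card_image_of_injective _ hf, card_univ, Fintype.card_fin]
  have h2 : image f univ = range k := by
    have := finset_sum_eq (image f univ)
      (by rw [h1, sum_image (fun x _ y _ h => hf h)]; exact h)
    rwa [h1] at this
  have hlt : ∀ i, f i < k := fun i =>
    mem_range.1 (h2 ▸ mem_image_of_mem f (mem_univ i))
  have hg : Function.Injective (fun i => (⟨f i, hlt i⟩ : Fin k)) := by
    intro i j hij
    exact hf (by simpa [Fin.mk.injEq] using hij)
  exact ⟨Equiv.ofBijective _ (Finite.injective_iff_bijective.1 hg), fun i => rfl⟩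

lemma sign_prod_pow_eq_det (a : Fin k → ℤ) (f : Fin k → ℕ) :
    ∑ σ : Perm (Fin k), (Perm.sign σ : ℤ) * ∏ i, a (σ i) ^ f i
      = (Matrix.of fun x y : Fin k => a x ^ f y).det := by
  rw [Matrix.det_apply]
  refine (Finset.sum_congr rfl fun σ _ => ?_).symm
  rw [Units.smul_def, zsmul_eq_mul]
  simp

lemma Tsum_expand (a b : Fin k → ℤ) (d : ℕ) :
    ∑ σ : Perm (Fin k), (Perm.sign σ : ℤ) * (∑ i, a (σ i) * b i) ^ d
    = ∑ f ∈ piAntidiag (univ : Finset (Fin k)) d,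
        (Nat.multinomial univ f : ℤ) * ((∏ i, b i ^ f i) *
          (Matrix.of fun x y : Fin k => a x ^ f y).det) := by
  have h1 : ∀ σ : Perm (Fin k), ((∑ i, a (σ i) * b i) ^ d : ℤ)
      = ∑ f ∈ piAntidiag (univ : Finset (Fin k)) d,
          (Nat.multinomial univ f : ℤ) * ((∏ i, a (σ i) ^ f i) * ∏ i, b i ^ f i) := by
    intro σ
    rw [Finset.sum_pow_eq_sum_piAntidiag]
    refine Finset.sum_congr rfl fun f _ => ?_
    rw [← Finset.prod_mul_distrib]
    simp_rw [mul_pow]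
  calc ∑ σ : Perm (Fin k), (Perm.sign σ : ℤ) * (∑ i, a (σ i) * b i) ^ d
      = ∑ σ : Perm (Fin k), ∑ f ∈ piAntidiag (univ : Finset (Fin k)) d,
          (Nat.multinomial univ f : ℤ) * ((∏ i, b i ^ f i) *
            ((Perm.sign σ : ℤ) * ∏ i, a (σ i) ^ f i)) := by
        refine Finset.sum_congr rfl fun σ _ => ?_
        rw [h1 σ, Finset.mul_sum]
        exact Finset.sum_congr rfl fun f _ => by ring
    _ = ∑ f ∈ piAntidiag (univ : Finset (Fin k)) d,
          (Nat.multinomial univ f : ℤ) * ((∏ i, b i ^ f i) *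
            ∑ σ : Perm (Fin k), (Perm.sign σ : ℤ) * ∏ i, a (σ i) ^ f i) := by
        rw [Finset.sum_comm]
        refine Finset.sum_congr rfl fun f _ => ?_
        rw [Finset.mul_sum, Finset.mul_sum]
    _ = _ := by
        refine Finset.sum_congr rfl fun f _ => ?_
        rw [sign_prod_pow_eq_det]

lemma Tsum_lt (a b : Fin k → ℤ) (d : ℕ) (hd : d < ∑ j ∈ range k, j) :
    ∑ σ : Perm (Fin k), (Perm.sign σ : ℤ) * (∑ i, a (σ i) * b i) ^ d = 0 := by
  rw [Tsum_expand]
  refine Finset.sum_eq_zero fun f hf => ?_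
  obtain ⟨hsum, -⟩ := Finset.mem_piAntidiag.1 hf
  by_cases hinj : Function.Injective f
  · exact absurd (inj_sum_ge f hinj) (by rw [show ∑ i, f i = d from hsum]; omega)
  · obtain ⟨y, y', heq, hne⟩ := Function.not_injective_iff.1 hinj
    have : (Matrix.of fun x y : Fin k => a x ^ f y).det = 0 :=
      Matrix.det_zero_of_column_eq hne (fun x => by simp [heq])
    rw [this, mul_zero, mul_zero]

lemma sign_pow_perm_eq_det (c : Fin k → ℤ) :
    ∑ σ : Perm (Fin k), (Perm.sign σ : ℤ) * ∏ i, c i ^ (σ i).val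
      = ∏ i : Fin k, ∏ j ∈ Ioi i, (c j - c i) := by
  rw [← Matrix.det_vandermonde c, ← Matrix.det_transpose, Matrix.det_apply]
  refine Finset.sum_congr rfl fun σ _ => ?_
  rw [Units.smul_def, zsmul_eq_mul]
  congr 1

lemma Tsum_max (a b : Fin k → ℤ) :
    ∑ σ : Perm (Fin k), (Perm.sign σ : ℤ) * (∑ i, a (σ i) * b i) ^ (∑ j ∈ range k, j)
    = (Nat.multinomial univ (fun i : Fin k => (i : ℕ)) : ℤ) *
      ((∏ i : Fin k, ∏ j ∈ Ioi i, (a j - a i)) * (∏ i : Fin k, ∏ j ∈ Ioi i, (b j - b i))) := by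
  classical
  rw [Tsum_expand]
  set M := ∑ j ∈ range k, j with hM
  set g : (Fin k → ℕ) → ℤ := fun f =>
    (Nat.multinomial univ f : ℤ) * ((∏ i, b i ^ f i) *
      (Matrix.of fun x y : Fin k => a x ^ f y).det) with hg
  have hsum_perm : ∀ τ : Perm (Fin k), ∑ i, (τ i).val = M := by
    intro τ
    rw [hM, ← Fin.sum_univ_eq_sum_range (fun j => j) k]
    exact Equiv.sum_comp τ (fun i => (i : ℕ))
  have himage : image (fun (τ : Perm (Fin k)) (i : Fin k) => (τ i).val) univ
      ⊆ piAntidiag (univ : Finset (Fin k)) M := by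
    intro f hf
    obtain ⟨τ, -, rfl⟩ := Finset.mem_image.1 hf
    exact Finset.mem_piAntidiag.2 ⟨hsum_perm τ, fun i _ => mem_univ i⟩
  have hzero : ∀ f ∈ piAntidiag (univ : Finset (Fin k)) M,
      f ∉ image (fun (τ : Perm (Fin k)) (i : Fin k) => (τ i).val) univ → g f = 0 := by
    intro f hf hnotim
    obtain ⟨hsum, -⟩ := Finset.mem_piAntidiag.1 hf
    by_cases hinj : Function.Injective f
    · obtain ⟨τ, hτ⟩ := inj_sum_eq_perm f hinj (by rw [hsum])
      exact absurd (Finset.mem_image.2 ⟨τ, mem_univ τ, by funext i; exact (hτ i).symm⟩) hnotim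
    · obtain ⟨y, y', heq, hne⟩ := Function.not_injective_iff.1 hinj
      have : (Matrix.of fun x y : Fin k => a x ^ f y).det = 0 :=
        Matrix.det_zero_of_column_eq hne (fun x => by simp [heq])
      rw [hg]; dsimp only; rw [this, mul_zero, mul_zero]
  rw [← Finset.sum_subset himage hzero,
    Finset.sum_image (fun τ _ τ' _ h => Equiv.ext fun i => Fin.val_injective (congrFun h i))]
  have hmult : ∀ τ : Perm (Fin k),
      Nat.multinomial univ (fun i => (τ i).val) = Nat.multinomial univ (fun i : Fin k => (i : ℕ)) := by
    intro τ
    have hp : ∏ i : Fin k, Nat.factorial (τ i).val = ∏ i : Fin k, Nat.factorial (i : ℕ) :=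
      Equiv.prod_comp τ (fun i : Fin k => Nat.factorial (i : ℕ))
    have hpos : 0 < ∏ i : Fin k, Nat.factorial (τ i).val :=
      Finset.prod_pos fun i _ => Nat.factorial_pos _
    have key : (∑ i : Fin k, (τ i).val) = ∑ i : Fin k, (i : ℕ) :=
      Equiv.sum_comp τ (fun i : Fin k => (i : ℕ))
    apply Nat.eq_of_mul_eq_mul_left hpos
    rw [Nat.multinomial_spec, key, hp, Nat.multinomial_spec]
  have hdet : ∀ τ : Perm (Fin k),
      (Matrix.of fun x y : Fin k => a x ^ (τ y).val).det
        = (Perm.sign τ : ℤ) * ∏ i : Fin k, ∏ j ∈ Ioi i, (a j - a i) := by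
    intro τ
    have : (Matrix.of fun x y : Fin k => a x ^ (τ y).val)
        = (Matrix.vandermonde a).submatrix id τ := by
      ext x y; simp [Matrix.vandermonde]
    rw [this, Matrix.det_permute', Matrix.det_vandermonde]; norm_cast
  calc ∑ τ : Perm (Fin k), g (fun i => (τ i).val)
      = ∑ τ : Perm (Fin k), (Nat.multinomial univ (fun i : Fin k => (i : ℕ)) : ℤ) *
          ((∏ i : Fin k, ∏ j ∈ Ioi i, (a j - a i)) *
            ((Perm.sign τ : ℤ) * ∏ i, b i ^ (τ i).val)) := by
        refine Finset.sum_congr rfl fun τ _ => ?_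
        rw [hg]; dsimp only
        rw [hmult τ, hdet τ]; ring
    _ = _ := by
        rw [← Finset.mul_sum, ← Finset.mul_sum, ← sign_pow_perm_eq_det b]

lemma cast_descFactorial (n m : ℕ) :
    ((n.descFactorial m : ℤ)) = ∏ t ∈ range m, ((n : ℤ) - t) := by
  induction m with
  | zero => simp
  | succ m ih =>
    rw [Nat.descFactorial_succ, Finset.prod_range_succ]
    by_cases h : m ≤ n
    · push_cast [Nat.cast_sub h]
      rw [← ih]; push_cast; ring
    · have h1 : n.descFactorial m = 0 := Nat.descFactorial_eq_zero_iff_lt.2 (by omega)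
      have h2 : ((n:ℤ) - n) = 0 := by ring
      rw [h1] at ih
      have hn : (n : ℕ) ∈ range m := mem_range.2 (by omega)
      rw [Finset.prod_eq_zero hn h2, show n - m = 0 by omega]
      simp

noncomputable def Qpoly (u v : Fin k → ℕ) : Polynomial ℤ :=
  (Matrix.of fun i j : Fin k => ((1 + Polynomial.X : Polynomial ℤ) ^ (u i * v j))).det

lemma Qpoly_coeff (u v : Fin k → ℕ) (m : ℕ) :
    (Qpoly u v).coeff m
      = ∑ σ : Perm (Fin k), (Perm.sign σ : ℤ) * ((∑ i, u (σ i) * v i).choose m : ℤ) := by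
  rw [Qpoly, Matrix.det_apply, Polynomial.finset_sum_coeff]
  refine Finset.sum_congr rfl fun σ _ => ?_
  rw [Polynomial.coeff_smul]
  have : ∏ i, (Matrix.of fun i j : Fin k => ((1 + Polynomial.X : Polynomial ℤ) ^ (u i * v j))) (σ i) i
      = (1 + Polynomial.X : Polynomial ℤ) ^ (∑ i, u (σ i) * v i) := by
    rw [← Finset.prod_pow_eq_pow_sum]
    rfl
  rw [this, Polynomial.coeff_one_add_X_pow]
  rw [Units.smul_def, zsmul_eq_mul]
  norm_cast

lemma factorial_mul_Qcoeff (u v : Fin k → ℕ) (m : ℕ) (hm : m ≤ ∑ j ∈ range k, j) :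
    (Nat.factorial m : ℤ) * (Qpoly u v).coeff m
      = ∑ σ : Perm (Fin k), (Perm.sign σ : ℤ) *
          ((∑ i, ((u (σ i) : ℤ)) * ((v i : ℤ)))) ^ m := by
  classical
  set π : Polynomial ℤ := ∏ t ∈ range m, (Polynomial.X - Polynomial.C (t : ℤ)) with hπ
  have hmonic : π.Monic := monic_prod_of_monic _ _ fun t _ => monic_X_sub_C _
  have hdeg : π.natDegree = m := by
    rw [hπ, Polynomial.natDegree_prod_of_monic _ _ fun t _ => monic_X_sub_C _]
    simp only [Polynomial.natDegree_X_sub_C, Finset.sum_const, card_range, smul_eq_mul, mul_one]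
  have heval : ∀ n : ℕ, π.eval ((n : ℤ)) = (Nat.factorial m : ℤ) * (n.choose m : ℤ) := by
    intro n
    rw [hπ, Polynomial.eval_prod]
    simp only [Polynomial.eval_sub, Polynomial.eval_X, Polynomial.eval_C]
    rw [← cast_descFactorial]
    exact_mod_cast congrArg (Nat.cast : ℕ → ℤ) (Nat.descFactorial_eq_factorial_mul_choose n m)
  have hE : ∀ σ : Perm (Fin k),
      ((∑ i, u (σ i) * v i : ℕ) : ℤ) = ∑ i, ((u (σ i) : ℤ)) * ((v i : ℤ)) := by
    intro σ; push_cast; rfl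
  rw [Qpoly_coeff, Finset.mul_sum]
  calc ∑ σ : Perm (Fin k), (Nat.factorial m : ℤ) *
        ((Perm.sign σ : ℤ) * ((∑ i, u (σ i) * v i).choose m : ℤ))
      = ∑ σ : Perm (Fin k), (Perm.sign σ : ℤ) * π.eval (((∑ i, u (σ i) * v i : ℕ) : ℤ)) := by
        refine Finset.sum_congr rfl fun σ _ => ?_
        rw [heval]; ring
    _ = ∑ σ : Perm (Fin k), ∑ d ∈ range (m + 1),
          π.coeff d * ((Perm.sign σ : ℤ) * (((∑ i, u (σ i) * v i : ℕ) : ℤ)) ^ d) := by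
        refine Finset.sum_congr rfl fun σ _ => ?_
        rw [Polynomial.eval_eq_sum_range, hdeg, Finset.mul_sum]
        exact Finset.sum_congr rfl fun d _ => by ring
    _ = ∑ d ∈ range (m + 1), π.coeff d *
          ∑ σ : Perm (Fin k), (Perm.sign σ : ℤ) * (∑ i, ((u (σ i) : ℤ)) * ((v i : ℤ))) ^ d := by
        rw [Finset.sum_comm]
        refine Finset.sum_congr rfl fun d _ => ?_
        rw [Finset.mul_sum]
        refine Finset.sum_congr rfl fun σ _ => by rw [hE]
    _ = _ := by
        rw [Finset.sum_range_succ]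
        have h0 : ∀ d ∈ range m, π.coeff d *
            (∑ σ : Perm (Fin k), (Perm.sign σ : ℤ) * (∑ i, ((u (σ i) : ℤ)) * ((v i : ℤ))) ^ d) = 0 := by
          intro d hd
          have h1 := Tsum_lt (fun x => ((u x : ℤ))) (fun x => ((v x : ℤ))) d
            (lt_of_lt_of_le (mem_range.1 hd) hm)
          rw [h1, mul_zero]
        rw [Finset.sum_eq_zero h0, zero_add]
        rw [show π.coeff m = 1 from hdeg ▸ hmonic.coeff_natDegree, one_mul]

lemma Qpoly_coeff_eq_zero (u v : Fin k → ℕ) {m : ℕ} (hm : m < ∑ j ∈ range k, j) :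
    (Qpoly u v).coeff m = 0 := by
  have h := factorial_mul_Qcoeff u v m (le_of_lt hm)
  have h1 := Tsum_lt (fun x => ((u x : ℤ))) (fun x => ((v x : ℤ))) m hm
  rw [h1] at h
  exact (mul_eq_zero.1 h).resolve_left (by exact_mod_cast Nat.factorial_ne_zero m)

lemma not_dvd_diff_prod {p : ℕ} (hp : p.Prime) (u : Fin k → ℕ)
    (hu : Function.Injective u) (hup : ∀ i, u i < p) :
    ¬ ((p : ℤ)) ∣ ∏ i : Fin k, ∏ j ∈ Ioi i, ((u j : ℤ) - (u i : ℤ)) := by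
  intro hdvd
  have hprime : Prime ((p : ℤ)) := Int.prime_iff_natAbs_prime.2 (by simpa using hp)
  obtain ⟨i, -, hi⟩ := (Prime.dvd_finset_prod_iff hprime _).1 hdvd
  obtain ⟨j, hj, hij⟩ := (Prime.dvd_finset_prod_iff hprime _).1 hi
  have hne : u j ≠ u i := fun h => (Finset.mem_Ioi.1 hj).ne' (hu h)
  obtain ⟨t, ht⟩ := hij
  have h1 : (u j : ℤ) - u i ≠ 0 := sub_ne_zero.2 (by exact_mod_cast hne)
  have h2 : ((u j : ℤ)) < p := by exact_mod_cast hup j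
  have h3 : ((u i : ℤ)) < p := by exact_mod_cast hup i
  have hppos : (0:ℤ) < p := by exact_mod_cast hp.pos
  have h4 : (0:ℤ) ≤ (u j:ℤ) := Int.natCast_nonneg _
  have h5 : (0:ℤ) ≤ (u i:ℤ) := Int.natCast_nonneg _
  have ht1 : t < 1 := by nlinarith
  have ht2 : -1 < t := by nlinarith
  have ht0 : t = 0 := by omega
  rw [ht0, mul_zero] at ht
  exact h1 ht

lemma not_dvd_Qpoly_coeff_max {p : ℕ} (hp : p.Prime) (hk : k ≤ p)
    (u v : Fin k → ℕ) (hu : Function.Injective u) (hv : Function.Injective v)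
    (hup : ∀ i, u i < p) (hvp : ∀ i, v i < p) :
    ¬ ((p : ℤ)) ∣ (Qpoly u v).coeff (∑ j ∈ range k, j) := by
  intro hdvd
  have h := factorial_mul_Qcoeff u v (∑ j ∈ range k, j) le_rfl
  have h2 := Tsum_max (fun x => ((u x : ℤ))) (fun x => ((v x : ℤ)))
  rw [h2] at h
  set c := (Qpoly u v).coeff (∑ j ∈ range k, j) with hc
  set Vu := ∏ i : Fin k, ∏ j ∈ Ioi i, ((u j : ℤ) - (u i : ℤ)) with hVu
  set Vv := ∏ i : Fin k, ∏ j ∈ Ioi i, ((v j : ℤ) - (v i : ℤ)) with hVv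
  set F : ℕ := ∏ i : Fin k, Nat.factorial (i : ℕ) with hF
  have hMF : F * Nat.multinomial (univ : Finset (Fin k)) (fun i : Fin k => (i : ℕ))
      = Nat.factorial (∑ j ∈ range k, j) := by
    have := Nat.multinomial_spec (univ : Finset (Fin k)) (fun i : Fin k => (i : ℕ))
    rwa [Fin.sum_univ_eq_sum_range (fun j => j) k] at this
  have hmne : (Nat.multinomial (univ : Finset (Fin k)) (fun i : Fin k => (i : ℕ)) : ℤ) ≠ 0 := by
    exact_mod_cast (Nat.multinomial_pos _ _).ne'
  have hFc : (F : ℤ) * c = Vu * Vv := by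
    apply mul_left_cancel₀ hmne
    calc (Nat.multinomial (univ : Finset (Fin k)) (fun i : Fin k => (i : ℕ)) : ℤ) * ((F : ℤ) * c)
        = ((F * Nat.multinomial (univ : Finset (Fin k)) (fun i : Fin k => (i : ℕ)) : ℕ) : ℤ) * c := by
          push_cast; ring
      _ = (Nat.factorial (∑ j ∈ range k, j) : ℤ) * c := by rw [hMF]
      _ = _ := by rw [h]
  have hprime : Prime ((p : ℤ)) := Int.prime_iff_natAbs_prime.2 (by simpa using hp)
  have hdvdVV : ((p : ℤ)) ∣ Vu * Vv := by
    rw [← hFc]; exact Dvd.dvd.mul_left hdvd (F : ℤ)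
  rcases hprime.dvd_mul.1 hdvdVV with hV | hV
  · exact not_dvd_diff_prod hp u hu hup hV
  · exact not_dvd_diff_prod hp v hv hvp hV

lemma chebotarev {p : ℕ} (hp : p.Prime) (ζ : ℂ) (hζ : IsPrimitiveRoot ζ p)
    (hk : k ≤ p) (u v : Fin k → ℕ) (hu : Function.Injective u) (hv : Function.Injective v)
    (hup : ∀ i, u i < p) (hvp : ∀ i, v i < p) :
    (Matrix.of fun i j : Fin k => ζ ^ (u i * v j)).det ≠ 0 := by
  intro hdet
  haveI : Fact p.Prime := ⟨hp⟩
  have hQeval : Polynomial.aeval (ζ - 1) (Qpoly u v) = 0 := by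
    have hmap := RingHom.map_det
      ((Polynomial.aeval (ζ - 1) : Polynomial ℤ →ₐ[ℤ] ℂ) : Polynomial ℤ →+* ℂ)
      (Matrix.of fun i j : Fin k => ((1 + Polynomial.X : Polynomial ℤ) ^ (u i * v j)))
    simp only [RingHom.mapMatrix_apply, RingHom.coe_coe] at hmap
    rw [Qpoly, hmap, ← hdet]
    congr 1
    ext i j
    simp [Matrix.map_apply]
  -- S := Q ∘ (X - 1) vanishes at ζ
  have hSeval : Polynomial.aeval ζ ((Qpoly u v).comp (Polynomial.X - 1)) = 0 := by
    rw [Polynomial.aeval_comp]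
    simpa using hQeval
  have hmindvd : Polynomial.cyclotomic p ℤ ∣ (Qpoly u v).comp (Polynomial.X - 1) := by
    rw [Polynomial.cyclotomic_eq_minpoly hζ hp.pos]
    exact minpoly.isIntegrallyClosed_dvd (hζ.isIntegral hp.pos) hSeval
  obtain ⟨h, hh⟩ := hmindvd
  have hQfact : Qpoly u v
      = ((Polynomial.cyclotomic p ℤ).comp (Polynomial.X + 1)) * (h.comp (Polynomial.X + 1)) := by
    have hc := congrArg (fun q => Polynomial.comp q (Polynomial.X + 1)) hh
    rw [Polynomial.mul_comp] at hc
    rw [Polynomial.comp_assoc] at hc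
    have hX : (Polynomial.X - 1 : Polynomial ℤ).comp (Polynomial.X + 1) = Polynomial.X := by
      simp [Polynomial.sub_comp]
    rw [hX, Polynomial.comp_X] at hc
    exact hc
  have hXdvd : Polynomial.X ^ (∑ j ∈ range k, j) ∣ Qpoly u v :=
    Polynomial.X_pow_dvd_iff.2 fun d hd => Qpoly_coeff_eq_zero u v hd
  have hXndvd : ¬ (Polynomial.X : Polynomial ℤ)
      ∣ (Polynomial.cyclotomic p ℤ).comp (Polynomial.X + 1) := by
    rw [Polynomial.X_dvd_iff]
    have hc0 : ((Polynomial.cyclotomic p ℤ).comp (Polynomial.X + 1)).coeff 0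
        = (Polynomial.cyclotomic p ℤ).eval 1 := by
      rw [Polynomial.coeff_zero_eq_eval_zero, Polynomial.eval_comp]
      simp
    rw [hc0, Polynomial.eval_one_cyclotomic_prime]
    exact_mod_cast hp.ne_zero
  have hXdvdh : Polynomial.X ^ (∑ j ∈ range k, j) ∣ h.comp (Polynomial.X + 1) := by
    refine (Polynomial.prime_X (R := ℤ)).pow_dvd_of_dvd_mul_left _ hXndvd ?_
    rw [← hQfact]; exact hXdvd
  obtain ⟨g, hg⟩ := hXdvdh
  have hQfinal : Qpoly u v = Polynomial.X ^ (∑ j ∈ range k, j) *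
      (((Polynomial.cyclotomic p ℤ).comp (Polynomial.X + 1)) * g) := by
    rw [hQfact, hg]; ring
  have hcoeffM : (Qpoly u v).coeff (∑ j ∈ range k, j)
      = (p : ℤ) * g.coeff 0 := by
    rw [hQfinal]
    have := Polynomial.coeff_X_pow_mul
      ((((Polynomial.cyclotomic p ℤ).comp (Polynomial.X + 1))) * g) (∑ j ∈ range k, j) 0
    rw [zero_add] at this
    rw [this, Polynomial.mul_coeff_zero]
    congr 1
    rw [Polynomial.coeff_zero_eq_eval_zero, Polynomial.eval_comp]
    simp [Polynomial.eval_one_cyclotomic_prime]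
  exact not_dvd_Qpoly_coeff_max hp hk u v hu hv hup hvp ⟨g.coeff 0, hcoeffM⟩

end Aux

lemma uncertainty (N : ℕ) (hN : N.Prime) [NeZero N] (b : ZMod N → ℂ) (hb : b ≠ 0) :
    N + 1 ≤ (univ.filter fun t => idft N b t ≠ 0).card
      + (univ.filter fun ω => b ω ≠ 0).card := by
  classical
  by_contra hcon
  push_neg at hcon
  set S := univ.filter (fun ω => b ω ≠ 0) with hS
  set k := S.card with hk
  have hSne : S.Nonempty := by
    rcases Function.ne_iff.1 hb with ⟨ω, hω⟩
    refine ⟨ω, ?_⟩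
    simp only [hS, mem_filter, mem_univ, true_and]
    simpa using hω
  have hk1 : 1 ≤ k := card_pos.2 hSne
  have hkN : k ≤ N := by
    calc k ≤ Fintype.card (ZMod N) := card_le_univ S
      _ = N := ZMod.card N
  set Z := univ.filter (fun t => idft N b t = 0) with hZ
  have hkZ : k ≤ Z.card := by
    have hsplit := card_filter_add_card_filter_not
      (s := (univ : Finset (ZMod N))) (p := fun t => idft N b t ≠ 0)
    rw [card_univ, ZMod.card] at hsplit
    have hZeq : Z = univ.filter (fun t => ¬ idft N b t ≠ 0) := by
      rw [hZ]
      apply Finset.filter_congr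
      intro t _
      simp
    rw [hZeq]
    omega
  obtain ⟨T, hTZ, hT⟩ := Finset.exists_subset_card_eq hkZ
  -- enumerations
  let ex : Fin k ≃ {x // x ∈ T} := (Fin.castOrderIso hT.symm).toEquiv.trans T.equivFin.symm
  let ey : Fin k ≃ {x // x ∈ S} := S.equivFin.symm
  let x : Fin k → ZMod N := fun i => (ex i : ZMod N)
  let y : Fin k → ZMod N := fun j => (ey j : ZMod N)
  have hxinj : Function.Injective x := fun i j h => ex.injective (Subtype.ext h)
  have hyinj : Function.Injective y := fun i j h => ey.injective (Subtype.ext h)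
  have hxT : ∀ i, x i ∈ T := fun i => (ex i).2
  have hyS : ∀ j, y j ∈ S := fun j => (ey j).2
  let u : Fin k → ℕ := fun i => (x i).val
  let v : Fin k → ℕ := fun j => (y j).val
  have hu : Function.Injective u := fun i j h => hxinj (ZMod.val_injective N h)
  have hv : Function.Injective v := fun i j h => hyinj (ZMod.val_injective N h)
  have hup : ∀ i, u i < N := fun i => ZMod.val_lt _
  have hvp : ∀ j, v j < N := fun j => ZMod.val_lt _
  set ζ : ℂ := Complex.exp (2 * Real.pi * Complex.I / N) with hζdef
  have hζ : IsPrimitiveRoot ζ N := Complex.isPrimitiveRoot_exp N (NeZero.ne N)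
  have hdet := chebotarev hN ζ hζ hkN u v hu hv hup hvp
  -- kernel vector
  have hNR : (Real.sqrt N : ℂ) ≠ 0 := by
    have : (0:ℝ) < Real.sqrt N := Real.sqrt_pos.2 (by exact_mod_cast hN.pos)
    exact_mod_cast this.ne'
  have hexp : ∀ (ω t : ZMod N), ζ ^ (ω.val * t.val)
      = Complex.exp ((2 * Real.pi * Complex.I * (ω.val : ℂ) * (t.val : ℂ)) / N) := by
    intro ω t
    rw [hζdef, ← Complex.exp_nat_mul]
    congr 1
    push_cast
    ring
  have hmv : (Matrix.of fun i j : Fin k => ζ ^ (u i * v j)).mulVec (fun j => b (y j)) = 0 := by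
    funext i
    have hxZ : idft N b (x i) = 0 := by
      have := hTZ (hxT i)
      rw [hZ] at this
      simpa using (Finset.mem_filter.1 this).2
    have hsum0 : ∑ ω : ZMod N, b ω *
        Complex.exp ((2 * Real.pi * Complex.I * (ω.val : ℂ) * ((x i).val : ℂ)) / N) = 0 := by
      have h0 := hxZ
      rw [idft] at h0
      rcases mul_eq_zero.1 h0 with h | h
      · exact absurd h (by simp [hNR])
      · exact h
    have hsum0' : ∑ ω ∈ S, b ω * ζ ^ (ω.val * (x i).val) = 0 := by
      have h1 : ∑ ω ∈ S, b ω * ζ ^ (ω.val * (x i).val)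
          = ∑ ω : ZMod N, b ω * ζ ^ (ω.val * (x i).val) :=
        Finset.sum_subset (Finset.subset_univ S) (fun ω _ hω => by
          have hbω : b ω = 0 := by
            by_contra hc
            exact hω (by simp [hS, hc])
          rw [hbω, zero_mul])
      have h2 : ∑ ω : ZMod N, b ω * ζ ^ (ω.val * (x i).val) = 0 := by
        rw [← hsum0]
        exact Finset.sum_congr rfl fun ω _ => by rw [hexp]
      rw [h1, h2]
    -- reindex over ey
    show (∑ j, ζ ^ (u i * v j) * b (y j)) = 0
    calc ∑ j, ζ ^ (u i * v j) * b (y j)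
        = ∑ ω ∈ S, ζ ^ (u i * ω.val) * b ω := by
          rw [← Finset.sum_attach S (fun ω => ζ ^ (u i * ω.val) * b ω), ← Finset.univ_eq_attach]
          exact Equiv.sum_comp ey (fun ω => ζ ^ (u i * (ω : ZMod N).val) * b (ω : ZMod N))
      _ = ∑ ω ∈ S, b ω * ζ ^ (ω.val * (x i).val) := by
          refine Finset.sum_congr rfl fun ω _ => ?_
          rw [mul_comm (u i) (ω.val)]
          ring
      _ = 0 := hsum0'
  have hcne : (fun j => b (y j)) ≠ 0 := by
    intro h
    have := congrFun h ⟨0, hk1⟩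
    exact absurd this (by simpa [hS] using (Finset.mem_filter.1 (hyS ⟨0, hk1⟩)).2)
  exact hdet (Matrix.exists_mulVec_eq_zero_iff.1 ⟨_, hcne, hmv⟩)

lemma idft_sub (N : ℕ) [NeZero N] (f g : ZMod N → ℂ) (t : ZMod N) :
    idft N (fun ω => f ω - g ω) t = idft N f t - idft N g t := by
  simp only [idft]
  rw [← mul_sub, ← Finset.sum_sub_distrib]
  congr 1
  exact Finset.sum_congr rfl fun ω _ => by ring

/-- For `N` prime, any decomposition with at most `N/2` terms in the
spikes-and-sinusoids dictionary is the unique `ℓ₀` minimizer. -/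
theorem stmt_7 (N : ℕ) (hN : N.Prime) [NeZero N]
    (α : (ZMod N → ℂ) × (ZMod N → ℂ)) (hα : (l0 N α : ℝ) ≤ N / 2) :
    ∀ β : (ZMod N → ℂ) × (ZMod N → ℂ),
      spikeSin N β = spikeSin N α → β ≠ α → l0 N α < l0 N β := by
  intro β hβ hne
  have h2α : 2 * l0 N α ≤ N := by
    have : (2 * l0 N α : ℝ) ≤ N := by linarith
    exact_mod_cast this
  set d1 : ZMod N → ℂ := fun t => β.1 t - α.1 t with hd1
  set d2 : ZMod N → ℂ := fun ω => β.2 ω - α.2 ω with hd2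
  have hker : ∀ t, d1 t = - idft N d2 t := by
    intro t
    have h := congrFun hβ t
    simp only [spikeSin] at h
    have := idft_sub N β.2 α.2 t
    rw [← hd2] at this
    rw [this, hd1]
    linear_combination h
  have hd2ne : d2 ≠ 0 := by
    intro h0
    apply hne
    have h1 : ∀ t, β.1 t = α.1 t := by
      intro t
      have hk := hker t
      rw [h0] at hk
      simp only [idft, Pi.zero_apply, zero_mul] at hk
      simp only [Finset.sum_const_zero, mul_zero, neg_zero, hd1] at hk
      exact sub_eq_zero.1 hk
    have h2 : β.2 = α.2 := by
      funext ω
      have hω := congrFun h0 ω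
      simp only [hd2, Pi.zero_apply] at hω
      exact sub_eq_zero.1 hω
    exact Prod.ext (funext h1) h2
  have hunc := uncertainty N hN d2 hd2ne
  have hsupp_eq : (univ.filter fun t => idft N d2 t ≠ 0)
      = (univ.filter fun t => d1 t ≠ 0) := by
    apply Finset.filter_congr
    intro t _
    rw [hker t]
    simp [neg_eq_zero]
  rw [hsupp_eq] at hunc
  have hsub1 : (univ.filter fun t => d1 t ≠ 0).card
      ≤ (univ.filter fun t => β.1 t ≠ 0).card + (univ.filter fun t => α.1 t ≠ 0).card := by
    refine le_trans (Finset.card_le_card ?_) (Finset.card_union_le _ _)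
    intro t ht
    simp only [mem_filter, mem_univ, true_and, Finset.mem_union, hd1] at ht ⊢
    by_contra hc
    push_neg at hc
    exact ht (by rw [hc.1, hc.2]; ring)
  have hsub2 : (univ.filter fun ω => d2 ω ≠ 0).card
      ≤ (univ.filter fun ω => β.2 ω ≠ 0).card + (univ.filter fun ω => α.2 ω ≠ 0).card := by
    refine le_trans (Finset.card_le_card ?_) (Finset.card_union_le _ _)
    intro t ht
    simp only [mem_filter, mem_univ, true_and, Finset.mem_union, hd2] at ht ⊢
    by_contra hc
    push_neg at hc
    exact ht (by rw [hc.1, hc.2]; ring)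
  have hl0α : l0 N α = (univ.filter fun t => α.1 t ≠ 0).card
      + (univ.filter fun ω => α.2 ω ≠ 0).card := rfl
  have hl0β : l0 N β = (univ.filter fun t => β.1 t ≠ 0).card
      + (univ.filter fun ω => β.2 ω ≠ 0).card := rfl
  omega
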